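/- Let Λ be an H-comodule algebra, regarded as a left H*-module via h* ⇀ m = Σ m⁽⁰⁾ h*(m⁽¹⁾) where ρ(m) = Σ m⁽⁰⁾ ⊗ m⁽¹⁾. If A ⊆ Λ is a subalgebra, then the smallest H-subcomodule subalgebra of Λ containing A equals the subalgebra of Λ generated by the set S = { h* ⇀ a : a ∈ A, h* ∈ H* }. -/

import Mathlib

/-!
The coaction is recovered from the `H^*`-action: expanding in a basis of `H`, `ρ x ∈ W ⊗ H`
exactly when `f ⇀ x ∈ W` for every `f ∈ H^*`. So every subcomodule subalgebra containing `A`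
contains `S`, and `A ⊆ S` since `a = ε ⇀ a`. Conversely coassociativity gives
`g ⇀ (f ⇀ a) = (g * f) ⇀ a` for the convolution product, so `ρ(S) ⊆ B ⊗ H`, and as `ρ` is
multiplicative this extends from the generators `S` to all of `B`.
-/

open TensorProduct

noncomputable section

variable (k : Type*) [Field k] (H Λ : Type*) [Ring H] [HopfAlgebra k H] [Ring Λ] [Algebra k Λ]

/-- The left `H^*`-action `f ⇀ m = ∑ m⁽⁰⁾ f(m⁽¹⁾) = (I ⊗ f)(ρ m)` on an `H`-comodule `Λ`. -/
def dualAct (ρ : Λ →ₗ[k] Λ ⊗[k] H) (f : Module.Dual k H) (m : Λ) : Λ :=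
  (TensorProduct.rid k Λ) ((LinearMap.lTensor Λ f) (ρ m))

/-- A non-unital subalgebra `W ⊆ Λ` is an `H`-subcomodule subalgebra when `ρ(W) ⊆ W ⊗ H`. -/
def IsSubcomoduleSubalg (ρ : Λ →ₗ[k] Λ ⊗[k] H) (W : NonUnitalSubalgebra k Λ) : Prop :=
  ∀ w ∈ W, ρ w ∈ LinearMap.range (LinearMap.rTensor H (Submodule.subtype W.toSubmodule))

section TensorLemmas

variable {R M N P : Type*} [CommSemiring R] [AddCommMonoid M] [Module R M]
  [AddCommMonoid N] [Module R N] [AddCommMonoid P] [Module R P]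

theorem rid_lTensor_rTensor (φ : M →ₗ[R] P) (f : Module.Dual R N) (t : M ⊗[R] N) :
    TensorProduct.rid R P (f.lTensor P (φ.rTensor N t)) =
      φ (TensorProduct.rid R M (f.lTensor M t)) := by
  induction t using TensorProduct.induction_on with
  | zero => simp
  | tmul m n => simp
  | add x y hx hy => simp only [map_add, hx, hy]

theorem rid_lTensor_rid_lTensor_assoc_symm (f : Module.Dual R N) (g : Module.Dual R P)
    (u : M ⊗[R] (N ⊗[R] P)) :
    TensorProduct.rid R M (f.lTensor M (TensorProduct.rid R (M ⊗[R] N)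
      (g.lTensor (M ⊗[R] N) ((TensorProduct.assoc R M N P).symm u)))) =
      TensorProduct.rid R M ((LinearMap.mul' R R ∘ₗ TensorProduct.map f g).lTensor M u) := by
  induction u using TensorProduct.induction_on with
  | zero => simp
  | tmul m v =>
    induction v using TensorProduct.induction_on with
    | zero => simp
    | tmul n p => simp [smul_smul, mul_comm]
    | add x y hx hy => simp only [tmul_add, map_add, hx, hy]
  | add x y hx hy => simp only [map_add, hx, hy]

theorem mem_range_rTensor_subtype_iff [Module.Free R N] (V : Submodule R M) (t : M ⊗[R] N) :
    t ∈ LinearMap.range (V.subtype.rTensor N) ↔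
      ∀ f : Module.Dual R N, TensorProduct.rid R M (f.lTensor M t) ∈ V := by
  classical
  constructor
  · rintro ⟨t, rfl⟩ f
    rw [rid_lTensor_rTensor]
    exact Submodule.coe_mem _
  · intro h
    let b := Module.Free.chooseBasis R N
    rw [← (TensorProduct.equivFinsuppOfBasisRight b).symm_apply_apply t,
      TensorProduct.equivFinsuppOfBasisRight_symm_apply]
    refine Submodule.finsuppSum_mem _ _ _ _ fun i _ ↦ ?_
    have hi := TensorProduct.equivFinsuppOfBasisRight_apply b t i ▸ h (b.coord i)
    exact ⟨⟨_, hi⟩ ⊗ₜ b i, rfl⟩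

end TensorLemmas

theorem NonUnitalSubalgebra.mul_mem_range_rTensor {R A C : Type*} [CommSemiring R] [Semiring A]
    [Algebra R A] [Semiring C] [Algebra R C] (B : NonUnitalSubalgebra R A) {s t : A ⊗[R] C}
    (hs : s ∈ LinearMap.range (B.toSubmodule.subtype.rTensor C))
    (ht : t ∈ LinearMap.range (B.toSubmodule.subtype.rTensor C)) :
    s * t ∈ LinearMap.range (B.toSubmodule.subtype.rTensor C) := by
  obtain ⟨s, rfl⟩ := hs
  obtain ⟨t, rfl⟩ := ht
  induction s using TensorProduct.induction_on with
  | zero => simp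
  | add x y hx hy => rw [map_add, add_mul]; exact add_mem hx hy
  | tmul b c =>
    induction t using TensorProduct.induction_on with
    | zero => simp
    | add x y hx hy => rw [map_add, mul_add]; exact add_mem hx hy
    | tmul b' c' =>
      exact ⟨(⟨b * b', B.mul_mem b.2 b'.2⟩ : B.toSubmodule) ⊗ₜ (c * c'), by simp⟩

section Comodule

variable {k H Λ}

theorem isSubcomoduleSubalg_adjoin (ρ : Λ →ₗ[k] Λ ⊗[k] H)
    (hmul : ∀ x y : Λ, ρ (x * y) = ρ x * ρ y) {s : Set Λ}
    (hs : ∀ x ∈ s, ρ x ∈ LinearMap.range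
      ((NonUnitalAlgebra.adjoin k s).toSubmodule.subtype.rTensor H)) :
    IsSubcomoduleSubalg k H Λ ρ (NonUnitalAlgebra.adjoin k s) := by
  intro w hw
  induction hw using NonUnitalAlgebra.adjoin_induction with
  | mem x hx => exact hs x hx
  | zero => simp
  | add x y _ _ hx hy => rw [map_add]; exact add_mem hx hy
  | mul x y _ _ hx hy => rw [hmul]; exact NonUnitalSubalgebra.mul_mem_range_rTensor _ hx hy
  | smul r x _ hx => rw [map_smul]; exact Submodule.smul_mem _ _ hx

theorem isSubcomoduleSubalg_iff_dualAct_mem (ρ : Λ →ₗ[k] Λ ⊗[k] H)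
    (W : NonUnitalSubalgebra k Λ) :
    IsSubcomoduleSubalg k H Λ ρ W ↔ ∀ w ∈ W, ∀ f : Module.Dual k H, dualAct k H Λ ρ f w ∈ W :=
  forall₂_congr fun w _ ↦ mem_range_rTensor_subtype_iff W.toSubmodule (ρ w)

open WithConv in
theorem dualAct_dualAct (ρ : Λ →ₗ[k] Λ ⊗[k] H)
    (hcoassoc : ∀ x : Λ, ρ.rTensor H (ρ x) =
      (TensorProduct.assoc k Λ H H).symm (Coalgebra.comul.lTensor Λ (ρ x)))
    (f g : Module.Dual k H) (a : Λ) :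
    dualAct k H Λ ρ f (dualAct k H Λ ρ g a) = dualAct k H Λ ρ (toConv f * toConv g).ofConv a := by
  simp only [dualAct]
  rw [← rid_lTensor_rTensor ρ g, hcoassoc, rid_lTensor_rid_lTensor_assoc_symm,
    ← LinearMap.lTensor_comp_apply]
  rfl

end Comodule

theorem subcomodule_subalgebra_generated
    (ρ : Λ →ₗ[k] Λ ⊗[k] H)
    -- `ρ` is an algebra homomorphism
    (hmul : ∀ x y : Λ, ρ (x * y) = ρ x * ρ y)
    -- comodule axioms
    (hcounit : ∀ x : Λ,
      (TensorProduct.rid k Λ) ((LinearMap.lTensor Λ Coalgebra.counit) (ρ x)) = x)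
    (hcoassoc : ∀ x : Λ,
      (LinearMap.rTensor H ρ) (ρ x) =
        (TensorProduct.assoc k Λ H H).symm ((LinearMap.lTensor Λ Coalgebra.comul) (ρ x)))
    -- a subalgebra `A ⊆ Λ`
    (A : NonUnitalSubalgebra k Λ) :
    -- `B`, the subalgebra generated by `S = H^* ⇀ A`:
    -- (i) contains `A`,
    (A : Set Λ) ⊆
      (NonUnitalAlgebra.adjoin k
        {x : Λ | ∃ (f : Module.Dual k H) (a : Λ), a ∈ A ∧ x = dualAct k H Λ ρ f a} :
          Set Λ) ∧
    -- (ii) is an `H`-subcomodule subalgebra,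
    IsSubcomoduleSubalg k H Λ ρ
      (NonUnitalAlgebra.adjoin k
        {x : Λ | ∃ (f : Module.Dual k H) (a : Λ), a ∈ A ∧ x = dualAct k H Λ ρ f a}) ∧
    -- (iii) and is contained in every `H`-subcomodule subalgebra containing `A`.
    (∀ W : NonUnitalSubalgebra k Λ, IsSubcomoduleSubalg k H Λ ρ W → (A : Set Λ) ⊆ W →
      NonUnitalAlgebra.adjoin k
        {x : Λ | ∃ (f : Module.Dual k H) (a : Λ), a ∈ A ∧ x = dualAct k H Λ ρ f a} ≤ W) := by
  set S := {x : Λ | ∃ (f : Module.Dual k H) (a : Λ), a ∈ A ∧ x = dualAct k H Λ ρ f a}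
  have hAS : (A : Set Λ) ⊆ S := fun a ha ↦ ⟨Coalgebra.counit, a, ha, (hcounit a).symm⟩
  refine ⟨hAS.trans (NonUnitalAlgebra.subset_adjoin k), ?_, fun W hW hAW ↦ ?_⟩
  · refine isSubcomoduleSubalg_adjoin ρ hmul fun x ⟨g, a, ha, hx⟩ ↦ ?_
    refine (mem_range_rTensor_subtype_iff _ _).2 fun f ↦ NonUnitalAlgebra.subset_adjoin k ?_
    exact ⟨_, a, ha, hx ▸ dualAct_dualAct ρ hcoassoc f g a⟩
  · refine NonUnitalAlgebra.adjoin_le ?_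
    rintro x ⟨f, a, ha, rfl⟩
    exact (isSubcomoduleSubalg_iff_dualAct_mem ρ W).1 hW a (hAW ha) f

end
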